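/- Under the root-subgroup data and Levi data hypotheses, if a subgroup K ≤ G satisfies condition (3.1), then L ∩ K = (U⁺ ∩ L ∩ K)(U⁻ ∩ L ∩ K)(N ∩ L ∩ K). (Abstract form of part (2) of the paper's Proposition following Henniart–Vignéras.) -/

import Mathlib

open Pointwise

section AxiomaticFramework

variable {G : Type*} [Group G] {ι : Type*}

/-- The subgroup generated by the root subgroups `U α` for `α ∈ s`. -/
def genU (U : ι → Subgroup G) (s : Finset ι) : Subgroup G := ⨆ α ∈ s, U α

/-- The multiplication map attached to an enumeration `l` of a set of roots is a
bijection from `∏ (K ∩ U α)` onto `K ∩ T`. -/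
def ProdBij (U : ι → Subgroup G) (K T : Subgroup G) (l : List ι) : Prop :=
  Function.Injective
    (fun x : ∀ i : Fin l.length, ↥(K ⊓ U (l.get i)) =>
      (List.ofFn fun i => ((x i : G))).prod) ∧
  Set.range
    (fun x : ∀ i : Fin l.length, ↥(K ⊓ U (l.get i)) =>
      (List.ofFn fun i => ((x i : G))).prod)
    = ((K ⊓ T : Subgroup G) : Set G)

/-- Condition (3.1) for a subgroup `K`, relative to root subgroups `U`,
reduced positive roots `PRp`, reduced negative roots `PRm`, `U⁺ = Up`, `U⁻ = Um`, `N`. -/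
def Cond31 (U : ι → Subgroup G) (PRp PRm : Finset ι) (Up Um N K : Subgroup G) : Prop :=
  ((K : Set G) = ↑(K ⊓ Um) * ↑(K ⊓ Up) * ↑(K ⊓ N)) ∧
  ((K : Set G) = ↑(K ⊓ Up) * ↑(K ⊓ Um) * ↑(K ⊓ N)) ∧
  (∀ l : List ι, l.Nodup → (∀ a, a ∈ l ↔ a ∈ PRp) → ProdBij U K Up l) ∧
  (∀ l : List ι, l.Nodup → (∀ a, a ∈ l ↔ a ∈ PRm) → ProdBij U K Um l)

/-- Condition (3.2) for a subgroup `K`. -/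
def Cond32 (Up Um Z K : Subgroup G) : Prop :=
  (K : Set G) = ↑(K ⊓ Up) * ↑(K ⊓ Um) * ↑(K ⊓ Up) * ↑(K ⊓ Z)

/-- Root-subgroup data: a finite set of roots `Phi` with a distinguished subset `PhiRed`
and a partition `Phi = PhiP ⊔ PhiM`, root subgroups `U α`, and subgroups `Z ≤ N`. -/
structure RootData (G : Type*) [Group G] (ι : Type*) [DecidableEq ι] where
  Phi : Finset ι
  PhiRed : Finset ι
  PhiP : Finset ι
  PhiM : Finset ι
  red_sub : PhiRed ⊆ Phi
  union_eq : PhiP ∪ PhiM = Phi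
  disj : Disjoint PhiP PhiM
  U : ι → Subgroup G
  Z : Subgroup G
  N : Subgroup G
  hZN : Z ≤ N

variable [DecidableEq ι]

namespace RootData

variable (D : RootData G ι)

/-- `U⁺`, the subgroup generated by the `U α`, `α ∈ Φ⁺`. -/
def Up : Subgroup G := genU D.U D.PhiP

/-- `U⁻`, the subgroup generated by the `U α`, `α ∈ Φ⁻`. -/
def Um : Subgroup G := genU D.U D.PhiM

/-- Condition (3.1) with respect to `G`. -/
def cond31 (K : Subgroup G) : Prop :=
  Cond31 D.U (D.PhiRed ∩ D.PhiP) (D.PhiRed ∩ D.PhiM) D.Up D.Um D.N K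

/-- Condition (3.2) with respect to `G`. -/
def cond32 (K : Subgroup G) : Prop := Cond32 D.Up D.Um D.Z K

end RootData

/-- Levi data for given root-subgroup data. -/
structure LeviData (D : RootData G ι) where
  PhiJ : Finset ι
  J_sub : PhiJ ⊆ D.Phi
  L : Subgroup G
  Q : Subgroup G
  hZL : D.Z ≤ L
  /-- (i): `U α ≤ L` for `α ∈ Φ_J` -/
  hUL : ∀ α ∈ PhiJ, D.U α ≤ L
  /-- (i): `U_J⁺ = L ∩ U⁺` is generated by the `U α`, `α ∈ Φ_J⁺` -/
  hUJp : L ⊓ D.Up = genU D.U (PhiJ ∩ D.PhiP)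
  /-- (i): `U_J⁻ = L ∩ U⁻` is generated by the `U α`, `α ∈ Φ_J⁻` -/
  hUJm : L ⊓ D.Um = genU D.U (PhiJ ∩ D.PhiM)
  /-- (ii): `L` normalizes `V⁺` -/
  hLnormV : ∀ l ∈ L, ∀ v ∈ genU D.U (D.PhiP \ PhiJ), l * v * l⁻¹ ∈ genU D.U (D.PhiP \ PhiJ)
  /-- (ii): `V⁺ ∩ L = 1` -/
  hVL : genU D.U (D.PhiP \ PhiJ) ⊓ L = ⊥
  /-- (ii): `Q = V⁺L` -/
  hQ_VL : (Q : Set G) = ↑(genU D.U (D.PhiP \ PhiJ)) * ↑L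
  /-- (ii): `Q = LV⁺` -/
  hQ_LV : (Q : Set G) = ↑L * ↑(genU D.U (D.PhiP \ PhiJ))
  /-- (iii): `G = U⁻NU⁺` -/
  bruhat_cover : (↑D.Um * ↑D.N * ↑D.Up : Set G) = Set.univ
  /-- (iii): uniqueness of the `N`-component -/
  bruhat_uniq : ∀ u₁ n₁ v₁ u₂ n₂ v₂ : G, u₁ ∈ D.Um → n₁ ∈ D.N → v₁ ∈ D.Up →
    u₂ ∈ D.Um → n₂ ∈ D.N → v₂ ∈ D.Up → u₁ * n₁ * v₁ = u₂ * n₂ * v₂ → n₁ = n₂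
  /-- (iv): decomposition of `L` -/
  hLdec : (L : Set G) ⊆ ↑(L ⊓ D.Um) * ↑(L ⊓ D.N) * ↑(L ⊓ D.Up)
  /-- (v): `V⁻ ∩ Q = 1` -/
  hVmQ : genU D.U (D.PhiM \ PhiJ) ⊓ Q = ⊥

namespace LeviData

variable {D : RootData G ι} (LD : LeviData D)

/-- `V⁺`, the subgroup generated by the `U α`, `α ∈ Φ⁺ \ Φ_J`. -/
def Vp : Subgroup G := genU D.U (D.PhiP \ LD.PhiJ)

/-- `V⁻`, the subgroup generated by the `U α`, `α ∈ Φ⁻ \ Φ_J`. -/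
def Vm : Subgroup G := genU D.U (D.PhiM \ LD.PhiJ)

/-- Condition (3.1) with respect to the Levi subgroup `L`. -/
def cond31L (K : Subgroup G) : Prop :=
  Cond31 D.U (LD.PhiJ ∩ D.PhiRed ∩ D.PhiP) (LD.PhiJ ∩ D.PhiRed ∩ D.PhiM)
    (LD.L ⊓ D.Up) (LD.L ⊓ D.Um) (D.N ⊓ LD.L) K

/-- Condition (3.2) with respect to the Levi subgroup `L`. -/
def cond32L (K : Subgroup G) : Prop :=
  Cond32 (LD.L ⊓ D.Up) (LD.L ⊓ D.Um) D.Z K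

end LeviData

end AxiomaticFramework


/-!
Write `k ∈ L ∩ K` as `k = a b c` with `a ∈ K ∩ U⁺`, `b ∈ K ∩ U⁻`, `c ∈ K ∩ N`. Enumerating the
reduced roots so that those of `Φ_J` sit next to the middle, the product decompositions of (3.1)
split `a = a₁ a₂` and `b = b₁ b₂` with `a₁ ∈ V⁺`, `b₂ ∈ V⁻` and `a₂, b₁ ∈ L`. Then
`b₂ c ∈ Q = L V⁺`, and uniqueness of the `N`-component in `G = U⁻ N U⁺` forces `c ∈ L`.
Hence `b₂ ∈ V⁻ ∩ Q = 1` and `a₁ ∈ V⁺ ∩ L = 1`.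
-/

section ProductDecomposition

variable {G : Type*} [Group G] {ι : Type*}

lemma le_genU (U : ι → Subgroup G) {s : Finset ι} {α : ι} (h : α ∈ s) :
    U α ≤ genU U s := le_iSup₂ (f := fun β _ => U β) α h

lemma genU_mono (U : ι → Subgroup G) {s t : Finset ι} (h : s ⊆ t) :
    genU U s ≤ genU U t := iSup₂_le fun _ hα => le_genU U (h hα)

lemma prod_ofFn_append_mem_mul {U : ι → Subgroup G} {S T : Subgroup G} {l₂ : List ι}
    (hT : ∀ α ∈ l₂, U α ≤ T) {l₁ : List ι} (hS : ∀ α ∈ l₁, U α ≤ S)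
    (x : ∀ i : Fin (l₁ ++ l₂).length, U ((l₁ ++ l₂).get i)) :
    (List.ofFn fun i => (x i : G)).prod ∈ (S : Set G) * T := by
  induction l₁ with
  | nil =>
    refine ⟨1, one_mem S, _, list_prod_mem ?_, one_mul _⟩
    intro g hg
    obtain ⟨i, rfl⟩ := List.mem_ofFn.1 hg
    exact hT _ (l₂.get_mem i) (x i).2
  | cons α l₁ ih =>
    obtain ⟨a, ha, b, hb, hab⟩ :=
      ih (fun β hβ => hS β (List.mem_cons_of_mem _ hβ)) (fun i => x i.succ)
    let x₀ := x (0 : Fin ((l₁ ++ l₂).length + 1))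
    have hcons : (List.ofFn fun i : Fin ((α :: l₁) ++ l₂).length => (x i : G)) =
        (x₀ : G) :: List.ofFn fun i : Fin (l₁ ++ l₂).length => (x i.succ : G) :=
      List.ofFn_succ
    refine ⟨(x₀ : G) * a, mul_mem (hS α List.mem_cons_self x₀.2) ha, b, hb, ?_⟩
    rw [hcons, List.prod_cons, ← hab]
    exact mul_assoc _ _ _

lemma ProdBij.subset_mul {U : ι → Subgroup G} {K T S₁ S₂ : Subgroup G} {l₁ l₂ : List ι}
    (h : ProdBij U K T (l₁ ++ l₂)) (h₁ : ∀ α ∈ l₁, U α ≤ S₁) (h₂ : ∀ α ∈ l₂, U α ≤ S₂) :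
    ((K ⊓ T : Subgroup G) : Set G) ⊆ ↑(K ⊓ S₁) * ↑(K ⊓ S₂) := by
  rw [← h.2]
  rintro _ ⟨x, rfl⟩
  exact prod_ofFn_append_mem_mul (U := fun α => K ⊓ U α)
    (fun α hα => inf_le_inf_left K (h₂ α hα)) (fun α hα => inf_le_inf_left K (h₁ α hα)) x

lemma subset_mul_of_forall_prodBij {U : ι → Subgroup G} {K T S₁ S₂ : Subgroup G}
    {s : Finset ι} (p : ι → Prop) [DecidablePred p]
    (h : ∀ l : List ι, l.Nodup → (∀ a, a ∈ l ↔ a ∈ s) → ProdBij U K T l)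
    (h₁ : ∀ α ∈ s, p α → U α ≤ S₁) (h₂ : ∀ α ∈ s, ¬ p α → U α ≤ S₂) :
    ((K ⊓ T : Subgroup G) : Set G) ⊆ ↑(K ⊓ S₁) * ↑(K ⊓ S₂) := by
  refine ProdBij.subset_mul (l₁ := (s.filter p).toList) (l₂ := (s.filter (¬ p ·)).toList)
    (h _ ?_ ?_) ?_ ?_
  · refine (Finset.nodup_toList _).append (Finset.nodup_toList _) fun a ha₁ ha₂ => ?_
    simp only [Finset.mem_toList, Finset.mem_filter] at ha₁ ha₂
    exact ha₂.2 ha₁.2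
  · intro a
    simp only [List.mem_append, Finset.mem_toList, Finset.mem_filter]
    tauto
  · intro α hα
    rw [Finset.mem_toList, Finset.mem_filter] at hα
    exact h₁ α hα.1 hα.2
  · intro α hα
    rw [Finset.mem_toList, Finset.mem_filter] at hα
    exact h₂ α hα.1 hα.2

end ProductDecomposition

namespace LeviData

variable {G : Type*} [Group G] {ι : Type*} [DecidableEq ι] {D : RootData G ι} (LD : LeviData D)

lemma Vp_le_Up : LD.Vp ≤ D.Up := genU_mono _ Finset.sdiff_subset

lemma Vm_le_Um : LD.Vm ≤ D.Um := genU_mono _ Finset.sdiff_subset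

lemma Vp_le_Q : LD.Vp ≤ LD.Q := fun v hv => by
  have hmem : v ∈ (LD.Vp : Set G) * LD.L := ⟨v, hv, 1, one_mem _, mul_one v⟩
  rwa [Vp, ← LD.hQ_VL] at hmem

lemma L_le_Q : LD.L ≤ LD.Q := fun l hl => by
  have hmem : l ∈ (LD.Vp : Set G) * LD.L := ⟨1, one_mem _, l, hl, one_mul l⟩
  rwa [Vp, ← LD.hQ_VL] at hmem

lemma eq_one_and_mem_L_of_mul_mem_Q {v n : G} (hv : v ∈ LD.Vm) (hn : n ∈ D.N)
    (hvn : v * n ∈ LD.Q) : v = 1 ∧ n ∈ LD.L := by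
  obtain ⟨l, hl, w, hw, hlw⟩ : v * n ∈ (LD.L : Set G) * LD.Vp := LD.hQ_LV ▸ hvn
  obtain ⟨_, ⟨u, hu, m, hm, rfl⟩, u', hu', rfl⟩ := LD.hLdec hl
  have hnm : n = m :=
    LD.bruhat_uniq v n 1 u m (u' * w) (LD.Vm_le_Um hv) hn (one_mem _) hu.2 hm.2
      (mul_mem hu'.2 (LD.Vp_le_Up hw)) (by rw [mul_one, ← hlw]; group)
  have hnL : n ∈ LD.L := hnm ▸ hm.1
  have hvQ : v ∈ LD.Q := by
    simpa using mul_mem hvn (inv_mem (LD.L_le_Q hnL))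
  have hvVQ : v ∈ LD.Vm ⊓ LD.Q := ⟨hv, hvQ⟩
  rw [show LD.Vm ⊓ LD.Q = ⊥ from LD.hVmQ, Subgroup.mem_bot] at hvVQ
  exact ⟨hvVQ, hnL⟩

lemma eq_one_and_mem_L_of_mul_mem_L {a₁ a₂ b₁ b₂ c : G} (ha₁ : a₁ ∈ LD.Vp) (ha₂ : a₂ ∈ LD.L)
    (hb₁ : b₁ ∈ LD.L) (hb₂ : b₂ ∈ LD.Vm) (hc : c ∈ D.N)
    (hk : a₁ * a₂ * (b₁ * b₂) * c ∈ LD.L) : a₁ = 1 ∧ b₂ = 1 ∧ c ∈ LD.L := by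
  have hb₂c : b₂ * c ∈ LD.Q := by
    have h : b₂ * c = b₁⁻¹ * a₂⁻¹ * a₁⁻¹ * (a₁ * a₂ * (b₁ * b₂) * c) := by group
    rw [h]
    exact mul_mem (mul_mem (mul_mem (LD.L_le_Q (inv_mem hb₁)) (LD.L_le_Q (inv_mem ha₂)))
      (LD.Vp_le_Q (inv_mem ha₁))) (LD.L_le_Q hk)
  obtain ⟨rfl, hcL⟩ := LD.eq_one_and_mem_L_of_mul_mem_Q hb₂ hc hb₂c
  have ha₁L : a₁ ∈ LD.L := by
    have h : a₁ = a₁ * a₂ * (b₁ * 1) * c * (a₂ * b₁ * c)⁻¹ := by group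
    rw [h]
    exact mul_mem hk (inv_mem (mul_mem (mul_mem ha₂ hb₁) hcL))
  have ha₁VL : a₁ ∈ LD.Vp ⊓ LD.L := ⟨ha₁, ha₁L⟩
  rw [show LD.Vp ⊓ LD.L = ⊥ from LD.hVL, Subgroup.mem_bot] at ha₁VL
  exact ⟨ha₁VL, rfl, hcL⟩

lemma inf_Up_subset {K : Subgroup G} (hK : D.cond31 K) :
    ((K ⊓ D.Up : Subgroup G) : Set G) ⊆ ↑(K ⊓ LD.Vp) * ↑(K ⊓ (LD.L ⊓ D.Up)) :=
  subset_mul_of_forall_prodBij (· ∉ LD.PhiJ) hK.2.2.1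
    (fun _ hα hJ => le_genU D.U (Finset.mem_sdiff.2 ⟨(Finset.mem_inter.1 hα).2, hJ⟩))
    (fun α hα hJ => le_inf (LD.hUL α (not_not.1 hJ)) (le_genU D.U (Finset.mem_inter.1 hα).2))

lemma inf_Um_subset {K : Subgroup G} (hK : D.cond31 K) :
    ((K ⊓ D.Um : Subgroup G) : Set G) ⊆ ↑(K ⊓ (LD.L ⊓ D.Um)) * ↑(K ⊓ LD.Vm) :=
  subset_mul_of_forall_prodBij (· ∈ LD.PhiJ) hK.2.2.2
    (fun α hα hJ => le_inf (LD.hUL α hJ) (le_genU D.U (Finset.mem_inter.1 hα).2))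
    (fun _ hα hJ => le_genU D.U (Finset.mem_sdiff.2 ⟨(Finset.mem_inter.1 hα).2, hJ⟩))

end LeviData

/-- If `K ≤ G` satisfies condition (3.1), then
`L ∩ K = (U⁺ ∩ L ∩ K)(U⁻ ∩ L ∩ K)(N ∩ L ∩ K)`. -/
theorem stmt2 {G : Type*} [Group G] {ι : Type*} [DecidableEq ι]
    (D : RootData G ι) (LD : LeviData D) (K : Subgroup G) (hK : D.cond31 K) :
    ((LD.L ⊓ K : Subgroup G) : Set G) =
      ((D.Up ⊓ LD.L ⊓ K : Subgroup G) : Set G) *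
      ((D.Um ⊓ LD.L ⊓ K : Subgroup G) : Set G) *
      ((D.N ⊓ LD.L ⊓ K : Subgroup G) : Set G) := by
  refine subset_antisymm ?_ ?_
  · rintro k ⟨hkL, hkK⟩
    obtain ⟨_, ⟨a, ha, b, hb, rfl⟩, c, hc, rfl⟩ := hK.2.1 ▸ hkK
    obtain ⟨a₁, ha₁, a₂, ha₂, rfl⟩ := LD.inf_Up_subset hK ha
    obtain ⟨b₁, hb₁, b₂, hb₂, rfl⟩ := LD.inf_Um_subset hK hb
    obtain ⟨rfl, rfl, hcL⟩ :=
      LD.eq_one_and_mem_L_of_mul_mem_L ha₁.2 ha₂.2.1 hb₁.2.1 hb₂.2 hc.2 hkL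
    exact ⟨a₂ * b₁, ⟨a₂, ⟨⟨ha₂.2.2, ha₂.2.1⟩, ha₂.1⟩, b₁, ⟨⟨hb₁.2.2, hb₁.2.1⟩, hb₁.1⟩, rfl⟩,
      c, ⟨⟨hc.2, hcL⟩, hc.1⟩, by group⟩
  · calc _ ⊆ ((LD.L ⊓ K : Subgroup G) : Set G) * ↑(LD.L ⊓ K) * ↑(LD.L ⊓ K) := by
          gcongr <;> exact inf_le_right
      _ = _ := by rw [coe_mul_coe, coe_mul_coe]
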